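/- Let Δ ⊆ ℝ^d be a reflexive polytope and let v₁, v₂ ∈ Δ ∩ ℤ^d be ℝ-linearly independent points with Cone(v₁,v₂) ∩ Δ ∩ ℤ^d = {0, v₁, v₂}. Then v₁ and v₂ lie in a common proper face of Δ; in particular, the line segment Conv(v₁, v₂) is contained in ∂Δ. -/

import Mathlib

open Pointwise

/-- The standard pairing `⟨m,n⟩ = ∑ i, mᵢ nᵢ` on `ℝ^d`. -/
def pairing {d : ℕ} (m n : Fin d → ℝ) : ℝ := ∑ i, m i * n i

/-- A point of `ℝ^d` is a lattice point if all coordinates are integers. -/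
def IsLatticePt {d : ℕ} (v : Fin d → ℝ) : Prop := ∀ i, ∃ n : ℤ, v i = (n : ℝ)

/-- The set of lattice points of `ℝ^d`. -/
def latticePts (d : ℕ) : Set (Fin d → ℝ) := {v | IsLatticePt v}

/-- A lattice polytope is the convex hull of finitely many lattice points. -/
def IsLatticePolytope {d : ℕ} (Δ : Set (Fin d → ℝ)) : Prop :=
  ∃ S : Finset (Fin d → ℝ), (S : Set (Fin d → ℝ)) ⊆ latticePts d ∧
    Δ = convexHull ℝ (S : Set (Fin d → ℝ))

/-- The dual polytope `Δ* = {m : ⟨m,n⟩ ≥ -1 for all n ∈ Δ}`. -/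
def dualPolytope {d : ℕ} (Δ : Set (Fin d → ℝ)) : Set (Fin d → ℝ) :=
  {m | ∀ n ∈ Δ, -1 ≤ pairing m n}

/-- A reflexive polytope: a lattice polytope with `0` in its interior
whose dual polytope is again a lattice polytope. -/
def IsReflexive {d : ℕ} (Δ : Set (Fin d → ℝ)) : Prop :=
  IsLatticePolytope Δ ∧ (0 : Fin d → ℝ) ∈ interior Δ ∧ IsLatticePolytope (dualPolytope Δ)

/-- `Cone(v₁,…,v_k) = {r₁v₁ + ⋯ + r_kv_k : rᵢ ≥ 0}`. -/
def coneOf {d k : ℕ} (v : Fin k → (Fin d → ℝ)) : Set (Fin d → ℝ) :=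
  {x | ∃ r : Fin k → ℝ, (∀ i, 0 ≤ r i) ∧ x = ∑ i, r i • v i}

/-- `r·∂Δ`, the frontier (topological boundary) of the dilate `rΔ`. -/
def bdry {d : ℕ} (r : ℝ) (Δ : Set (Fin d → ℝ)) : Set (Fin d → ℝ) := frontier (r • Δ)

/-- The points of `S` lie in a common proper face of `Δ`: there is `u` with
`⟨u,x⟩ ≤ 1` on `Δ` and `⟨u,v⟩ = 1` for all `v ∈ S`. -/
def InCommonFace {d : ℕ} (Δ : Set (Fin d → ℝ)) (S : Set (Fin d → ℝ)) : Prop :=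
  ∃ u : Fin d → ℝ, (∀ x ∈ Δ, pairing u x ≤ 1) ∧ ∀ v ∈ S, pairing u v = 1

/-- Coordinatewise cast of an integer vector to a real vector. -/
def toRealVec {d : ℕ} (n : Fin d → ℤ) : Fin d → ℝ := fun i => (n i : ℝ)

/-!
If `v₁` and `v₂` lay in no common face, then no vertex `m` of the dual polytope could pair to
`-1` with both of them. As `m`, `v₁`, `v₂` are lattice points, the pairings `⟨m, vᵢ⟩` are integers
`≥ -1`, so `⟨m, v₁ + v₂⟩ ≥ -1` for every vertex `m`, and by biduality `v₁ + v₂ ∈ Δ`. This lattice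
point of `Cone(v₁, v₂)` is neither `0`, `v₁` nor `v₂`. A common face `⟨u, ·⟩ = 1` contains the
segment, and a point where a nonzero linear form attains its maximum over `Δ` is not interior.
-/

open Filter Topology

section Pairing

variable {d : ℕ} (m x y : Fin d → ℝ) (c : ℝ)

lemma pairing_eq_dotProduct : pairing m x = m ⬝ᵥ x := rfl

lemma pairing_add_right : pairing m (x + y) = pairing m x + pairing m y := dotProduct_add m x y

lemma pairing_smul_left : pairing (c • m) x = c * pairing m x := smul_dotProduct c m x

lemma pairing_smul_right : pairing m (c • x) = c * pairing m x := dotProduct_smul c m x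

lemma pairing_neg_left : pairing (-m) x = -pairing m x := neg_dotProduct m x

end Pairing

lemma IsLatticePt.add {d : ℕ} {v w : Fin d → ℝ} (hv : IsLatticePt v) (hw : IsLatticePt w) :
    IsLatticePt (v + w) := by
  intro i
  obtain ⟨a, ha⟩ := hv i
  obtain ⟨b, hb⟩ := hw i
  exact ⟨a + b, by simp [ha, hb]⟩

lemma IsLatticePt.exists_pairing_eq_intCast {d : ℕ} {m v : Fin d → ℝ} (hm : IsLatticePt m)
    (hv : IsLatticePt v) : ∃ z : ℤ, pairing m v = z := by
  choose a ha using hm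
  choose b hb using hv
  exact ⟨∑ i, a i * b i, by simp [pairing, ha, hb]⟩

lemma IsLatticePolytope.convex {d : ℕ} {Δ : Set (Fin d → ℝ)} (hΔ : IsLatticePolytope Δ) :
    Convex ℝ Δ := by
  obtain ⟨S, -, rfl⟩ := hΔ
  exact convex_convexHull ℝ _

lemma IsLatticePolytope.isClosed {d : ℕ} {Δ : Set (Fin d → ℝ)} (hΔ : IsLatticePolytope Δ) :
    IsClosed Δ := by
  obtain ⟨S, -, rfl⟩ := hΔ
  exact (S.finite_toSet.isCompact_convexHull (𝕜 := ℝ)).isClosed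

lemma add_mem_coneOf_pair {d : ℕ} (v₁ v₂ : Fin d → ℝ) : v₁ + v₂ ∈ coneOf ![v₁, v₂] :=
  ⟨![1, 1], fun i => by fin_cases i <;> norm_num, by simp [Fin.sum_univ_two]⟩

lemma add_notMem_of_linearIndependent_pair {R M : Type*} [Ring R] [Nontrivial R]
    [AddCommGroup M] [Module R M] {v₁ v₂ : M} (hli : LinearIndependent R ![v₁, v₂]) :
    v₁ + v₂ ∉ ({0, v₁, v₂} : Set M) := by
  rintro (h | h | h)
  · simpa using LinearIndependent.pair_iff.1 hli 1 1 (by simpa using h)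
  · simpa using hli.ne_zero 1 (by simpa using h)
  · simpa using hli.ne_zero 0 (by simpa using h)

lemma convex_setOf_neg_one_le_pairing {d : ℕ} (x : Fin d → ℝ) :
    Convex ℝ {m : Fin d → ℝ | -1 ≤ pairing m x} :=
  convex_halfSpace_ge ⟨fun a b => add_dotProduct a b x, fun c a => smul_dotProduct c a x⟩ (-1)

theorem mem_of_forall_mem_dualPolytope {d : ℕ} {Δ : Set (Fin d → ℝ)} (hconv : Convex ℝ Δ)
    (hcl : IsClosed Δ) (h0 : (0 : Fin d → ℝ) ∈ Δ) {x : Fin d → ℝ}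
    (hx : ∀ m ∈ dualPolytope Δ, -1 ≤ pairing m x) : x ∈ Δ := by
  by_contra hxΔ
  obtain ⟨f, s, hfΔ, hfx⟩ := geometric_hahn_banach_closed_point hconv hcl hxΔ
  have hs : 0 < s := by simpa using hfΔ 0 h0
  set w := (dotProductEquiv ℝ (Fin d)).symm f.toLinearMap
  have hfw : ∀ y, w ⬝ᵥ y = f y := fun y =>
    LinearMap.congr_fun ((dotProductEquiv ℝ (Fin d)).apply_symm_apply f.toLinearMap) y
  have hw : ∀ y, pairing (-s⁻¹ • w) y = -(f y / s) := fun y => by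
    rw [pairing_smul_left, pairing_eq_dotProduct, hfw, div_eq_inv_mul, neg_mul]
  have hmΔ : -s⁻¹ • w ∈ dualPolytope Δ := fun n hn => by
    rw [hw, neg_le_neg_iff, div_le_one hs]
    exact (hfΔ n hn).le
  have := hx _ hmΔ
  rw [hw, neg_le_neg_iff, div_le_one hs] at this
  linarith

lemma inCommonFace_of_mem_dualPolytope {d : ℕ} {Δ S : Set (Fin d → ℝ)} {m : Fin d → ℝ}
    (hm : m ∈ dualPolytope Δ) (hS : ∀ v ∈ S, pairing m v = -1) : InCommonFace Δ S := by
  refine ⟨-m, fun x hx => ?_, fun v hv => ?_⟩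
  · linarith [pairing_neg_left m x, hm x hx]
  · rw [pairing_neg_left, hS v hv, neg_neg]

theorem add_mem_of_not_inCommonFace {d : ℕ} {Δ : Set (Fin d → ℝ)} (hΔ : IsReflexive Δ)
    {v₁ v₂ : Fin d → ℝ} (hv₁ : v₁ ∈ Δ) (hv₂ : v₂ ∈ Δ) (hv₁L : IsLatticePt v₁)
    (hv₂L : IsLatticePt v₂) (hnf : ¬InCommonFace Δ {v₁, v₂}) : v₁ + v₂ ∈ Δ := by
  obtain ⟨hΔL, h0, T, hTL, hT⟩ := hΔ
  refine mem_of_forall_mem_dualPolytope hΔL.convex hΔL.isClosed (interior_subset h0)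
    fun m hm => ?_
  rw [hT] at hm
  refine convexHull_min (fun m hmT => ?_) (convex_setOf_neg_one_le_pairing _) hm
  have hmΔ : m ∈ dualPolytope Δ := hT ▸ subset_convexHull ℝ _ hmT
  obtain ⟨z₁, hz₁⟩ := (hTL hmT).exists_pairing_eq_intCast hv₁L
  obtain ⟨z₂, hz₂⟩ := (hTL hmT).exists_pairing_eq_intCast hv₂L
  have h₁ : (-1 : ℤ) ≤ z₁ := by exact_mod_cast hz₁ ▸ hmΔ v₁ hv₁
  have h₂ : (-1 : ℤ) ≤ z₂ := by exact_mod_cast hz₂ ▸ hmΔ v₂ hv₂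
  have hne : ¬(z₁ = -1 ∧ z₂ = -1) := by
    rintro ⟨rfl, rfl⟩
    refine hnf (inCommonFace_of_mem_dualPolytope hmΔ ?_)
    rintro v (rfl | rfl) <;> simp [hz₁, hz₂]
  have : (-1 : ℤ) ≤ z₁ + z₂ := by omega
  show -1 ≤ pairing m (v₁ + v₂)
  rw [pairing_add_right, hz₁, hz₂]
  exact_mod_cast this

theorem mem_frontier_of_pairing_eq_one {d : ℕ} {Δ : Set (Fin d → ℝ)} {u y : Fin d → ℝ}
    (hu : ∀ x ∈ Δ, pairing u x ≤ 1) (hy : y ∈ Δ) (huy : pairing u y = 1) : y ∈ frontier Δ := by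
  refine ⟨subset_closure hy, fun hint => ?_⟩
  have hu0 : u ≠ 0 := by rintro rfl; simp [pairing] at huy
  have huu : 0 < pairing u u :=
    lt_of_le_of_ne (by simpa [pairing_eq_dotProduct] using dotProduct_self_star_nonneg u)
      (Ne.symm (dotProduct_self_eq_zero.not.2 hu0))
  have hlim : Tendsto (fun t : ℝ => y + t • u) (𝓝[>] 0) (𝓝 y) :=
    tendsto_nhdsWithin_of_tendsto_nhds
      ((continuous_const.add (continuous_id.smul continuous_const)).tendsto' 0 y (by simp))
  obtain ⟨t, hyt, ht⟩ :=
    ((hlim.eventually_mem (mem_interior_iff_mem_nhds.1 hint)).and self_mem_nhdsWithin).exists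
  have := hu _ hyt
  rw [pairing_add_right, pairing_smul_right, huy] at this
  linarith [mul_pos ht huu]

theorem segment_subset_frontier_of_inCommonFace {d : ℕ} {Δ : Set (Fin d → ℝ)}
    (hconv : Convex ℝ Δ) {v₁ v₂ : Fin d → ℝ} (hv₁ : v₁ ∈ Δ) (hv₂ : v₂ ∈ Δ)
    (hface : InCommonFace Δ {v₁, v₂}) : segment ℝ v₁ v₂ ⊆ frontier Δ := by
  obtain ⟨u, hu, huv⟩ := hface
  rintro _ ⟨a, b, ha, hb, hab, rfl⟩
  refine mem_frontier_of_pairing_eq_one hu (hconv hv₁ hv₂ ha hb hab) ?_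
  rw [pairing_add_right, pairing_smul_right, pairing_smul_right, huv v₁ (by simp),
    huv v₂ (by simp), mul_one, mul_one, hab]

/-- If `v₁, v₂` are linearly independent lattice points of a reflexive
polytope `Δ ⊆ ℝ^d` with `Cone(v₁,v₂) ∩ Δ ∩ ℤ^d = {0, v₁, v₂}`, then `v₁` and `v₂` lie
in a common proper face of `Δ`; in particular the segment `Conv(v₁,v₂)` lies in `∂Δ`. -/
theorem edge_of_maximal_fan_in_boundary
    (d : ℕ) (Δ : Set (Fin d → ℝ)) (hΔ : IsReflexive Δ)
    (v₁ v₂ : Fin d → ℝ)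
    (hvΔ : v₁ ∈ Δ ∧ v₂ ∈ Δ) (hvL : IsLatticePt v₁ ∧ IsLatticePt v₂)
    (hli : LinearIndependent ℝ ![v₁, v₂])
    (hcone : coneOf ![v₁, v₂] ∩ Δ ∩ latticePts d = ({0, v₁, v₂} : Set (Fin d → ℝ))) :
    InCommonFace Δ {v₁, v₂} ∧ segment ℝ v₁ v₂ ⊆ frontier Δ := by
  obtain ⟨hv₁, hv₂⟩ := hvΔ
  obtain ⟨hv₁L, hv₂L⟩ := hvL
  have hface : InCommonFace Δ {v₁, v₂} := by
    by_contra hnf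
    have hsum : v₁ + v₂ ∈ coneOf ![v₁, v₂] ∩ Δ ∩ latticePts d :=
      ⟨⟨add_mem_coneOf_pair v₁ v₂, add_mem_of_not_inCommonFace hΔ hv₁ hv₂ hv₁L hv₂L hnf⟩,
        hv₁L.add hv₂L⟩
    exact add_notMem_of_linearIndependent_pair hli (hcone ▸ hsum)
  exact ⟨hface, segment_subset_frontier_of_inCommonFace hΔ.1.convex hv₁ hv₂ hface⟩
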